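/- Under the identification via the pairing ⟨a,b⟩ = Σ_{[ξ]} d_ξ Tr(a(ξ)b(ξ)), every continuous linear functional on the Fréchet space S(Ĝ) = ∩_{k∈ℤ}S^k(Ĝ) is represented by some a ∈ S^k(Ĝ) for some k ∈ ℤ; i.e., the topological dual S'(Ĝ) is isomorphic to ∪_{k∈ℤ} S^k(Ĝ). -/

import Mathlib

open scoped Matrix

variable {I : Type*}

/-- Membership in the weighted matrix-sequence space `S^d(Ĝ)`. -/
def memS (n : I → ℕ) (w : I → ℝ) (d : ℝ)
    (a : ∀ ξ : I, Matrix (Fin (n ξ)) (Fin (n ξ)) ℂ) : Prop :=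
  Summable fun ξ => (n ξ : ℝ) * w ξ ^ (2 * d) * (Matrix.trace ((a ξ)ᴴ * a ξ)).re

/-- The norm of `S^d(Ĝ)`. -/
noncomputable def nrmS (n : I → ℕ) (w : I → ℝ) (d : ℝ)
    (a : ∀ ξ : I, Matrix (Fin (n ξ)) (Fin (n ξ)) ℂ) : ℝ :=
  Real.sqrt (∑' ξ, (n ξ : ℝ) * w ξ ^ (2 * d) * (Matrix.trace ((a ξ)ᴴ * a ξ)).re)

/-- Membership in the Schwartz-type space `S(Ĝ) = ∩_{k∈ℤ} S^k(Ĝ)`. -/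
def memSchwartz (n : I → ℕ) (w : I → ℝ)
    (a : ∀ ξ : I, Matrix (Fin (n ξ)) (Fin (n ξ)) ℂ) : Prop :=
  ∀ k : ℤ, memS n w (k : ℝ) a

/-!
A continuous functional `L` on `S(Ĝ)` is bounded by a single norm, `‖L a‖ ≤ C ‖a‖_{S^k}`.
Evaluating `L` on the matrix units placed at one `ξ` yields `b(ξ)` with
`L (δ_ξ M) = d_ξ Tr (b(ξ) M)`, hence the pairing formula for every finitely supported `a`.
Testing `L` on the finite truncations of `w^{-2k} b^*` gives `S_F ≤ C √S_F` for the partial sums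
`S_F` of `‖b‖²_{S^{-k}}`, so `b ∈ S^{-k}`; and since the finite truncations of `a ∈ S(Ĝ)` converge
to `a` in `S^k`, the pairing series converges to `L a`.
-/

open Filter Topology

attribute [local instance] Matrix.frobeniusNormedAddCommGroup Matrix.frobeniusNormedSpace

namespace Matrix

theorem trace_conjTranspose_mul_self_eq_frobenius_norm_sq {m n 𝕜 : Type*} [Fintype m]
    [Fintype n] [RCLike 𝕜] (A : Matrix m n 𝕜) : trace (Aᴴ * A) = ((‖A‖ ^ 2 : ℝ) : 𝕜) := by
  rw [frobenius_norm_def, ← Real.rpow_natCast, ← Real.rpow_mul (by positivity)]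
  simp only [trace, diag, mul_apply, conjTranspose_apply, RCLike.star_def, RCLike.conj_mul]
  norm_num
  rw [Finset.sum_comm]

theorem trace_mul_conjTranspose_eq_frobenius_norm_sq {m n 𝕜 : Type*} [Fintype m]
    [Fintype n] [RCLike 𝕜] (A : Matrix m n 𝕜) : trace (A * Aᴴ) = ((‖A‖ ^ 2 : ℝ) : 𝕜) := by
  simpa [frobenius_norm_conjTranspose] using trace_conjTranspose_mul_self_eq_frobenius_norm_sq Aᴴ

variable {m R : Type*} [Fintype m] [DecidableEq m] [CommSemiring R]

def traceDual (f : Matrix m m R →ₗ[R] R) : Matrix m m R :=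
  of fun j i => f (single i j 1)

theorem trace_traceDual_mul (f : Matrix m m R →ₗ[R] R) (M : Matrix m m R) :
    trace (traceDual f * M) = f M := by
  suffices traceLinearMap m R R ∘ₗ LinearMap.mulLeft R (traceDual f) = f from
    LinearMap.congr_fun this M
  refine ext_linearMap R fun i j => LinearMap.ext fun c => ?_
  have hc : single i j c = c • single i j 1 := by simp [smul_single]
  simp only [LinearMap.comp_apply, singleLinearMap_apply, LinearMap.mulLeft_apply,
    traceLinearMap_apply, trace_mul_single, traceDual]
  rw [hc, map_smul]
  simp [mul_comm]

end Matrix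

theorem Real.rpow_two_mul_intCast (x : ℝ) (k : ℤ) : x ^ (2 * (k : ℝ)) = x ^ (2 * k) := by
  rw [← Real.rpow_intCast]
  push_cast
  rfl

section WeightedSpaces

variable {n : I → ℕ} {w : I → ℝ}

noncomputable def sTerm (n : I → ℕ) (w : I → ℝ) (d : ℝ)
    (a : ∀ ξ : I, Matrix (Fin (n ξ)) (Fin (n ξ)) ℂ) (ξ : I) : ℝ :=
  n ξ * w ξ ^ (2 * d) * ‖a ξ‖ ^ 2

theorem sTerm_eq_re_trace {d : ℝ} (a : ∀ ξ : I, Matrix (Fin (n ξ)) (Fin (n ξ)) ℂ) (ξ : I) :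
    sTerm n w d a ξ = n ξ * w ξ ^ (2 * d) * (Matrix.trace ((a ξ)ᴴ * a ξ)).re := by
  rw [Matrix.trace_conjTranspose_mul_self_eq_frobenius_norm_sq, sTerm]
  rfl

theorem memS_iff_summable_sTerm {d : ℝ} {a : ∀ ξ : I, Matrix (Fin (n ξ)) (Fin (n ξ)) ℂ} :
    memS n w d a ↔ Summable (sTerm n w d a) := by
  simp only [memS, ← sTerm_eq_re_trace]

theorem nrmS_eq_sqrt_tsum_sTerm {d : ℝ} (a : ∀ ξ : I, Matrix (Fin (n ξ)) (Fin (n ξ)) ℂ) :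
    nrmS n w d a = √(∑' ξ, sTerm n w d a ξ) := by
  simp only [nrmS, ← sTerm_eq_re_trace]

theorem sTerm_intCast_nonneg (k : ℤ) (a : ∀ ξ : I, Matrix (Fin (n ξ)) (Fin (n ξ)) ℂ) (ξ : I) :
    0 ≤ sTerm n w k a ξ := by
  have := (even_two_mul k).zpow_nonneg (w ξ)
  rw [sTerm, Real.rpow_two_mul_intCast]
  positivity

theorem sTerm_intCast_add_le (k : ℤ) (a b : ∀ ξ : I, Matrix (Fin (n ξ)) (Fin (n ξ)) ℂ) (ξ : I) :
    sTerm n w k (a + b) ξ ≤ 2 * sTerm n w k a ξ + 2 * sTerm n w k b ξ := by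
  have hw := (even_two_mul k).zpow_nonneg (w ξ)
  have hab : ‖a ξ + b ξ‖ ^ 2 ≤ 2 * ‖a ξ‖ ^ 2 + 2 * ‖b ξ‖ ^ 2 := by
    nlinarith [norm_add_le (a ξ) (b ξ), norm_nonneg (a ξ + b ξ), sq_nonneg (‖a ξ‖ - ‖b ξ‖)]
  simp only [sTerm, Real.rpow_two_mul_intCast, Pi.add_apply]
  nlinarith [mul_le_mul_of_nonneg_left hab (mul_nonneg (Nat.cast_nonneg (n ξ)) hw)]

theorem sTerm_smul {d : ℝ} (c : ℂ) (a : ∀ ξ : I, Matrix (Fin (n ξ)) (Fin (n ξ)) ℂ) (ξ : I) :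
    sTerm n w d (c • a) ξ = ‖c‖ ^ 2 * sTerm n w d a ξ := by
  simp only [sTerm, Pi.smul_apply, norm_smul]
  ring

theorem memS_zero (d : ℝ) : memS n w d 0 := by
  rw [memS_iff_summable_sTerm]
  exact summable_zero.congr fun ξ => by simp [sTerm]

theorem memS_intCast_add {k : ℤ} {a b : ∀ ξ : I, Matrix (Fin (n ξ)) (Fin (n ξ)) ℂ}
    (ha : memS n w k a) (hb : memS n w k b) : memS n w k (a + b) := by
  rw [memS_iff_summable_sTerm] at ha hb ⊢
  exact .of_nonneg_of_le (fun ξ => sTerm_intCast_nonneg k _ ξ)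
    (fun ξ => sTerm_intCast_add_le k a b ξ) ((ha.mul_left 2).add (hb.mul_left 2))

theorem memS_smul {d : ℝ} (c : ℂ) {a : ∀ ξ : I, Matrix (Fin (n ξ)) (Fin (n ξ)) ℂ}
    (ha : memS n w d a) : memS n w d (c • a) := by
  rw [memS_iff_summable_sTerm] at ha ⊢
  exact (ha.mul_left (‖c‖ ^ 2)).congr fun ξ => (sTerm_smul c a ξ).symm

theorem memS_pi_single [DecidableEq I] (d : ℝ) (ξ : I) (M : Matrix (Fin (n ξ)) (Fin (n ξ)) ℂ) :
    memS n w d (Pi.single ξ M) := by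
  rw [memS_iff_summable_sTerm]
  refine summable_of_ne_finset_zero (s := {ξ}) fun η hη => ?_
  simp [sTerm, Pi.single_eq_of_ne (Finset.notMem_singleton.mp hη)]

theorem sTerm_sum_pi_single [DecidableEq I] (d : ℝ) (F : Finset I)
    (a : ∀ ξ : I, Matrix (Fin (n ξ)) (Fin (n ξ)) ℂ) :
    sTerm n w d (∑ ξ ∈ F, Pi.single ξ (a ξ)) = (↑F : Set I).indicator (sTerm n w d a) := by
  ext ξ
  by_cases hξ : ξ ∈ F <;> simp [sTerm, Finset.sum_pi_single, hξ]

theorem sTerm_sub_sum_pi_single [DecidableEq I] (d : ℝ) (F : Finset I)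
    (a : ∀ ξ : I, Matrix (Fin (n ξ)) (Fin (n ξ)) ℂ) :
    sTerm n w d (a - ∑ ξ ∈ F, Pi.single ξ (a ξ)) = (↑F : Set I)ᶜ.indicator (sTerm n w d a) := by
  ext ξ
  by_cases hξ : ξ ∈ F <;> simp [sTerm, Finset.sum_pi_single, hξ]

-- Outside `S^d` this holds only because `nrmS` is then the junk value `0` all along the net.
theorem tendsto_nrmS_sub_sum_pi_single [DecidableEq I] (d : ℝ)
    (a : ∀ ξ : I, Matrix (Fin (n ξ)) (Fin (n ξ)) ℂ) :
    Tendsto (fun F : Finset I => nrmS n w d (a - ∑ ξ ∈ F, Pi.single ξ (a ξ))) atTop (𝓝 0) := by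
  simp only [nrmS_eq_sqrt_tsum_sTerm, sTerm_sub_sum_pi_single, ← tsum_subtype]
  have := (Real.continuous_sqrt.tendsto 0).comp (tendsto_tsum_compl_atTop_zero (sTerm n w d a))
  rwa [Real.sqrt_zero] at this

end WeightedSpaces

def schwartzSubmodule (n : I → ℕ) (w : I → ℝ) :
    Submodule ℂ (∀ ξ : I, Matrix (Fin (n ξ)) (Fin (n ξ)) ℂ) where
  carrier := {a | memSchwartz n w a}
  add_mem' ha hb k := memS_intCast_add (ha k) (hb k)
  zero_mem' k := memS_zero k
  smul_mem' c _ ha k := memS_smul c (ha k)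

theorem mem_schwartzSubmodule {n : I → ℕ} {w : I → ℝ}
    {a : ∀ ξ : I, Matrix (Fin (n ξ)) (Fin (n ξ)) ℂ} :
    a ∈ schwartzSubmodule n w ↔ memSchwartz n w a :=
  Iff.rfl

section Representation

variable [DecidableEq I]

def singleSchwartz {n : I → ℕ} (w : I → ℝ) (ξ : I) :
    Matrix (Fin (n ξ)) (Fin (n ξ)) ℂ →ₗ[ℂ] schwartzSubmodule n w :=
  (LinearMap.single ℂ _ ξ).codRestrict _ fun M =>
    mem_schwartzSubmodule.mpr fun k => memS_pi_single (k : ℝ) ξ M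

def truncate {n : I → ℕ} (w : I → ℝ) (F : Finset I)
    (a : ∀ ξ : I, Matrix (Fin (n ξ)) (Fin (n ξ)) ℂ) : schwartzSubmodule n w :=
  ∑ ξ ∈ F, singleSchwartz w ξ (a ξ)

variable {n : I → ℕ} {w : I → ℝ}

theorem coe_truncate (F : Finset I) (a : ∀ ξ : I, Matrix (Fin (n ξ)) (Fin (n ξ)) ℂ) :
    (truncate w F a : ∀ ξ : I, Matrix (Fin (n ξ)) (Fin (n ξ)) ℂ) = ∑ ξ ∈ F, Pi.single ξ (a ξ) := by
  simp [truncate, singleSchwartz]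

noncomputable def dualRep (Λ : schwartzSubmodule n w →ₗ[ℂ] ℂ) :
    ∀ ξ : I, Matrix (Fin (n ξ)) (Fin (n ξ)) ℂ :=
  fun ξ => (n ξ : ℂ)⁻¹ • Matrix.traceDual (Λ ∘ₗ singleSchwartz w ξ)

theorem apply_singleSchwartz (Λ : schwartzSubmodule n w →ₗ[ℂ] ℂ) (ξ : I)
    (M : Matrix (Fin (n ξ)) (Fin (n ξ)) ℂ) :
    Λ (singleSchwartz w ξ M) = n ξ * Matrix.trace (dualRep Λ ξ * M) := by
  rcases (n ξ).eq_zero_or_pos with h | h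
  · have : M = 0 := by ext i; exact (Fin.cast h i).elim0
    simp [this]
  · rw [dualRep, Matrix.smul_mul, Matrix.trace_smul, Matrix.trace_traceDual_mul, smul_eq_mul,
      mul_inv_cancel_left₀ (by exact_mod_cast h.ne')]
    rfl

theorem apply_truncate (Λ : schwartzSubmodule n w →ₗ[ℂ] ℂ) (F : Finset I)
    (a : ∀ ξ : I, Matrix (Fin (n ξ)) (Fin (n ξ)) ℂ) :
    Λ (truncate w F a) = ∑ ξ ∈ F, n ξ * Matrix.trace (dualRep Λ ξ * a ξ) := by
  simp only [truncate, map_sum, apply_singleSchwartz]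

theorem hasSum_dualRep {Λ : schwartzSubmodule n w →ₗ[ℂ] ℂ} {d C : ℝ}
    (hΛ : ∀ a, ‖Λ a‖ ≤ C * nrmS n w d a) {a : ∀ ξ : I, Matrix (Fin (n ξ)) (Fin (n ξ)) ℂ}
    (ha : a ∈ schwartzSubmodule n w) :
    HasSum (fun ξ => (n ξ : ℂ) * Matrix.trace (dualRep Λ ξ * a ξ)) (Λ ⟨a, ha⟩) := by
  have hdist (F : Finset I) : ‖Λ (truncate w F a) - Λ ⟨a, ha⟩‖ ≤
      C * nrmS n w d (a - ∑ ξ ∈ F, Pi.single ξ (a ξ)) := by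
    rw [norm_sub_rev, ← map_sub, ← coe_truncate]
    exact hΛ _
  have hlim := (tendsto_nrmS_sub_sum_pi_single (w := w) d a).const_mul C
  rw [mul_zero] at hlim
  rw [HasSum, tendsto_iff_norm_sub_tendsto_zero]
  simp only [← apply_truncate]
  exact squeeze_zero (fun _ => norm_nonneg _) hdist hlim

theorem memS_neg_dualRep (hw : ∀ ξ, w ξ ≠ 0) {Λ : schwartzSubmodule n w →ₗ[ℂ] ℂ} {k : ℤ}
    {C : ℝ} (hΛ : ∀ a, ‖Λ a‖ ≤ C * nrmS n w k a) : memS n w (-k : ℤ) (dualRep Λ) := by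
  set b := dualRep Λ
  rw [memS_iff_summable_sTerm]
  refine summable_of_sum_le (c := C ^ 2) (fun ξ => sTerm_intCast_nonneg _ _ ξ) fun F => ?_
  set S := ∑ ξ ∈ F, sTerm n w (-k : ℤ) b ξ
  -- Pairing `b` with `c = w^{-2k} bᴴ` gives `‖b‖²_{S^{-k}}`, which is also `‖c‖²_{S^k}`.
  let c : ∀ ξ : I, Matrix (Fin (n ξ)) (Fin (n ξ)) ℂ := fun ξ =>
    ((w ξ ^ (2 * -k) : ℝ) : ℂ) • (b ξ)ᴴ
  have hpair (ξ : I) : (n ξ : ℂ) * Matrix.trace (b ξ * c ξ) = sTerm n w (-k : ℤ) b ξ := by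
    simp only [c, Matrix.mul_smul, Matrix.trace_smul,
      Matrix.trace_mul_conjTranspose_eq_frobenius_norm_sq, sTerm, Real.rpow_two_mul_intCast,
      RCLike.ofReal_eq_complex_ofReal, smul_eq_mul]
    push_cast
    ring
  have hterm (ξ : I) : sTerm n w k c ξ = sTerm n w (-k : ℤ) b ξ := by
    have hinv : w ξ ^ (2 * k) * w ξ ^ (2 * -k) = 1 := by
      rw [← zpow_add₀ (hw ξ)]
      simp
    simp only [c, sTerm, Real.rpow_two_mul_intCast, norm_smul, Matrix.frobenius_norm_conjTranspose,
      Complex.norm_real, Real.norm_eq_abs, mul_pow, sq_abs]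
    linear_combination (n ξ * w ξ ^ (2 * -k) * ‖b ξ‖ ^ 2) * hinv
  have hΛS : Λ (truncate w F c) = S := by
    rw [apply_truncate, Complex.ofReal_sum]
    exact Finset.sum_congr rfl fun ξ _ => hpair ξ
  have hnrm : nrmS n w k (truncate w F c) = √S := by
    rw [nrmS_eq_sqrt_tsum_sTerm, coe_truncate, sTerm_sum_pi_single, ← sum_eq_tsum_indicator]
    simp only [hterm, S]
  have hS0 : 0 ≤ S := Finset.sum_nonneg fun ξ _ => sTerm_intCast_nonneg _ _ ξ
  have hS : S ≤ C * √S := by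
    simpa [hΛS, hnrm, abs_of_nonneg hS0] using hΛ (truncate w F c)
  nlinarith [Real.sq_sqrt hS0, Real.sqrt_nonneg S, sq_nonneg (C - √S)]

end Representation

theorem stmt8_general (n : I → ℕ) (w : I → ℝ) (hw : ∀ ξ, 1 ≤ w ξ)
    (L : (∀ ξ : I, Matrix (Fin (n ξ)) (Fin (n ξ)) ℂ) → ℂ)
    (hadd : ∀ a b, memSchwartz n w a → memSchwartz n w b → L (a + b) = L a + L b)
    (hsmul : ∀ (c : ℂ) a, memSchwartz n w a → L (c • a) = c * L a)
    (hcont : ∃ (k : ℤ) (C : ℝ), ∀ a, memSchwartz n w a →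
      ‖L a‖ ≤ C * nrmS n w (k : ℝ) a) :
    ∃ (k' : ℤ) (b : ∀ ξ : I, Matrix (Fin (n ξ)) (Fin (n ξ)) ℂ),
      memS n w (k' : ℝ) b ∧
      ∀ a, memSchwartz n w a →
        L a = ∑' ξ, (n ξ : ℂ) * Matrix.trace (b ξ * a ξ) := by
  classical
  obtain ⟨k, C, hL⟩ := hcont
  let Λ : schwartzSubmodule n w →ₗ[ℂ] ℂ :=
    { toFun a := L a
      map_add' a b := hadd a b a.2 b.2
      map_smul' c a := hsmul c a a.2 }
  have hΛ (a : schwartzSubmodule n w) : ‖Λ a‖ ≤ C * nrmS n w k a := hL a a.2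
  refine ⟨-k, dualRep Λ, memS_neg_dualRep (fun ξ => (one_pos.trans_le (hw ξ)).ne') hΛ,
    fun a ha => (hasSum_dualRep hΛ ha).tsum_eq.symm⟩

/-- every continuous linear functional on the Fréchet space
`S(Ĝ) = ∩_k S^k(Ĝ)` (continuity being expressed by a bound `|L a| ≤ C‖a‖_{S^k}` by
one of the defining norms) is represented, via the trace pairing
`⟨a,b⟩ = Σ d_ξ Tr(a(ξ)b(ξ))`, by an element `b ∈ S^{k'}(Ĝ)` for some `k' ∈ ℤ`;
i.e. `S'(Ĝ) ≅ ∪_{k∈ℤ} S^k(Ĝ)`. -/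
theorem stmt8 [Countable I] (n : I → ℕ) (w : I → ℝ) (hw : ∀ ξ, 1 ≤ w ξ)
    (L : (∀ ξ : I, Matrix (Fin (n ξ)) (Fin (n ξ)) ℂ) → ℂ)
    (hadd : ∀ a b, memSchwartz n w a → memSchwartz n w b → L (a + b) = L a + L b)
    (hsmul : ∀ (c : ℂ) a, memSchwartz n w a → L (c • a) = c * L a)
    (hcont : ∃ (k : ℤ) (C : ℝ), ∀ a, memSchwartz n w a →
      ‖L a‖ ≤ C * nrmS n w (k : ℝ) a) :
    ∃ (k' : ℤ) (b : ∀ ξ : I, Matrix (Fin (n ξ)) (Fin (n ξ)) ℂ),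
      memS n w (k' : ℝ) b ∧
      ∀ a, memSchwartz n w a →
        L a = ∑' ξ, (n ξ : ℂ) * Matrix.trace (b ξ * a ξ) :=
  stmt8_general n w hw L hadd hsmul hcont
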